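/- In the max-relaxation iteration for an irreducible finite matrix set 𝒜, the inequalities ρ⁻_n ≤ ρ⁻_{n+1} ≤ ρ⁺_{n+1} ≤ ρ⁺_n hold for every n ≥ 0; in particular ρ⁻_n ≤ ρ⁺_k for all n, k ≥ 0, and the limits ρ⁻ = lim ρ⁻_n and ρ⁺ = lim ρ⁺_n exist. -/

import Mathlib

open Matrix Filter Topology Bornology Pointwise

/-- `N` is a norm on `ℝ^m`: nonnegative, definite, absolutely homogeneous, subadditive. -/
def IsNorm {m : ℕ} (N : (Fin m → ℝ) → ℝ) : Prop :=
  (∀ x, 0 ≤ N x) ∧ (∀ x, N x = 0 → x = 0) ∧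
    (∀ (t : ℝ) (x), N (t • x) = |t| * N x) ∧ (∀ x y, N (x + y) ≤ N x + N y)

/-- `N` is a seminorm on `ℝ^m`. -/
def IsSeminorm {m : ℕ} (N : (Fin m → ℝ) → ℝ) : Prop :=
  (∀ x, 0 ≤ N x) ∧
    (∀ (t : ℝ) (x), N (t • x) = |t| * N x) ∧ (∀ x y, N (x + y) ≤ N x + N y)

/-- The family `A` is irreducible: the matrices have no common invariant subspace
other than `⊥` and `⊤`. -/
def IsIrreducibleFamily {m r : ℕ} (A : Fin r → Matrix (Fin m) (Fin m) ℝ) : Prop :=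
  ∀ W : Submodule ℝ (Fin m → ℝ), (∀ i, ∀ x ∈ W, (A i).mulVec x ∈ W) → W = ⊥ ∨ W = ⊤

/-- The operator norm of a matrix acting on `ℝ^m` (with its sup norm). -/
noncomputable def matNorm {m : ℕ} (M : Matrix (Fin m) (Fin m) ℝ) : ℝ :=
  ‖LinearMap.toContinuousLinearMap M.mulVecLin‖

/-- The joint spectral radius of the family `A`:
`limsup_n (max over words of length n of the norm of the product)^(1/n)`. -/
noncomputable def jsr {m r : ℕ} (A : Fin r → Matrix (Fin m) (Fin m) ℝ) : ℝ :=
  Filter.atTop.limsup fun n : ℕ =>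
    (⨆ w : Fin n → Fin r, matNorm (List.ofFn fun k => A (w k)).prod) ^ (1 / (n : ℝ))

/-- `maxA A N x = max_i N (A_i x)`. -/
noncomputable def maxA {m r : ℕ} (A : Fin r → Matrix (Fin m) (Fin m) ℝ)
    (N : (Fin m → ℝ) → ℝ) (x : Fin m → ℝ) : ℝ :=
  ⨆ i, N ((A i).mulVec x)

/-- `ρ⁺ = max_{x ≠ 0} (max_i N (A_i x)) / N x`. -/
noncomputable def rhoSup {m r : ℕ} (A : Fin r → Matrix (Fin m) (Fin m) ℝ)
    (N : (Fin m → ℝ) → ℝ) : ℝ :=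
  sSup ((fun x => maxA A N x / N x) '' {x | x ≠ 0})

/-- `ρ⁻ = min_{x ≠ 0} (max_i N (A_i x)) / N x`. -/
noncomputable def rhoInf {m r : ℕ} (A : Fin r → Matrix (Fin m) (Fin m) ℝ)
    (N : (Fin m → ℝ) → ℝ) : ℝ :=
  sInf ((fun x => maxA A N x / N x) '' {x | x ≠ 0})

/-- An averaging function: continuous on positives, `γ t t = t`, and strictly
between `min` and `max` off the diagonal. -/
def IsAveraging (γ : ℝ → ℝ → ℝ) : Prop :=
  ContinuousOn (fun p : ℝ × ℝ => γ p.1 p.2) {p | 0 < p.1 ∧ 0 < p.2} ∧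
    (∀ t, 0 < t → γ t t = t) ∧
    ∀ t s, 0 < t → 0 < s → t ≠ s → min t s < γ t s ∧ γ t s < max t s

/-- The max-relaxation iteration: `‖x‖_{n+1} = max (‖x‖_n, γ_n⁻¹ max_i ‖A_i x‖_n)`
where `γ_n = γ (ρ⁻_n, ρ⁺_n)`. -/
noncomputable def iterN {m r : ℕ} (A : Fin r → Matrix (Fin m) (Fin m) ℝ)
    (γ : ℝ → ℝ → ℝ) (N0 : (Fin m → ℝ) → ℝ) : ℕ → (Fin m → ℝ) → ℝ
  | 0 => N0
  | n + 1 => fun x =>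
      max (iterN A γ N0 n x)
        ((γ (rhoInf A (iterN A γ N0 n)) (rhoSup A (iterN A γ N0 n)))⁻¹ *
          maxA A (iterN A γ N0 n) x)

/-- The normalized norms `‖x‖°_n = ‖x‖_n / ‖e‖_n` of the max-relaxation iteration
(for `n = 0` this equals `‖x‖_0` since `‖e‖_0 = 1`). -/
noncomputable def iterNnorm {m r : ℕ} (A : Fin r → Matrix (Fin m) (Fin m) ℝ)
    (γ : ℝ → ℝ → ℝ) (N0 : (Fin m → ℝ) → ℝ) (e : Fin m → ℝ) (n : ℕ) :
    (Fin m → ℝ) → ℝ :=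
  fun x => iterN A γ N0 n x / iterN A γ N0 n e

/-- `e⁺(N, N') = max_{x ≠ 0} N x / N' x`. -/
noncomputable def ePlus {m : ℕ} (N N' : (Fin m → ℝ) → ℝ) : ℝ :=
  sSup ((fun x => N x / N' x) '' {x | x ≠ 0})

/-- `e⁻(N, N') = min_{x ≠ 0} N x / N' x`. -/
noncomputable def eMinus {m : ℕ} (N N' : (Fin m → ℝ) → ℝ) : ℝ :=
  sInf ((fun x => N x / N' x) '' {x | x ≠ 0})

/-- The eccentricity of the norm `N` with respect to the norm `N'`. -/
noncomputable def ecc {m : ℕ} (N N' : (Fin m → ℝ) → ℝ) : ℝ :=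
  ePlus N N' / eMinus N N'

/-! With `M x = max_i N (A_i x)` one has `ρ⁻ N ≤ M ≤ ρ⁺ N`. For `N' = max (N, t M)` with
`t > 0` and `t⁻¹ ≤ ρ⁺`, both `N (A_i x) ≤ M x ≤ t⁻¹ N' x ≤ ρ⁺ N' x` and
`t M (A_i x) ≤ t ρ⁺ M x ≤ ρ⁺ N' x`, so `max_i N' (A_i x) ≤ ρ⁺ N' x`; dually
`ρ⁻ N' x ≤ max_i N' (A_i x)` for any `t ≥ 0`. The relaxation uses `t = γ_n⁻¹`, and
`γ_n ∈ [ρ⁻_n, ρ⁺_n]` is positive because irreducibility forces `ρ⁻_n > 0`: the common kernel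
of the `A_i` is invariant, hence trivial. Hence `ρ⁻_n` increases, `ρ⁺_n` decreases, and
each bounds the other. -/

variable {m r : ℕ}

lemma le_maxA (A : Fin r → Matrix (Fin m) (Fin m) ℝ) (N : (Fin m → ℝ) → ℝ) (x : Fin m → ℝ)
    (i : Fin r) : N ((A i).mulVec x) ≤ maxA A N x :=
  le_ciSup (f := fun i => N ((A i).mulVec x)) (Set.finite_range _).bddAbove i

namespace IsSeminorm

variable {N : (Fin m → ℝ) → ℝ}

def toSeminorm (h : IsSeminorm N) : Seminorm ℝ (Fin m → ℝ) :=
  Seminorm.of N h.2.2 fun t x => by rw [h.2.1, Real.norm_eq_abs]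

lemma map_zero (h : IsSeminorm N) : N 0 = 0 :=
  _root_.map_zero h.toSeminorm

lemma continuous (h : IsSeminorm N) : Continuous N :=
  continuousOn_univ.mp (h.toSeminorm.convexOn.continuousOn isOpen_univ)

lemma maxA (h : IsSeminorm N) (A : Fin r → Matrix (Fin m) (Fin m) ℝ) :
    IsSeminorm (maxA A N) := by
  refine ⟨fun x => Real.iSup_nonneg fun i => h.1 _, fun t x => ?_, fun x y => ?_⟩
  · simp only [_root_.maxA, Matrix.mulVec_smul, h.2.1]
    exact (Real.mul_iSup_of_nonneg (abs_nonneg t) _).symm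
  · refine Real.iSup_le (fun i => ?_) (add_nonneg (Real.iSup_nonneg fun i => h.1 _)
      (Real.iSup_nonneg fun i => h.1 _))
    rw [Matrix.mulVec_add]
    exact (h.2.2 _ _).trans (add_le_add (le_maxA A N x i) (le_maxA A N y i))

end IsSeminorm

namespace IsNorm

variable {N : (Fin m → ℝ) → ℝ}

lemma isSeminorm (h : IsNorm N) : IsSeminorm N :=
  ⟨h.1, h.2.2.1, h.2.2.2⟩

lemma pos (h : IsNorm N) {x : Fin m → ℝ} (hx : x ≠ 0) : 0 < N x :=
  (h.1 x).lt_of_ne fun h0 => hx (h.2.1 x h0.symm)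

lemma max_mul (hN : IsNorm N) {M : (Fin m → ℝ) → ℝ} (hM : IsSeminorm M) {t : ℝ} (ht : 0 ≤ t) :
    IsNorm fun x => max (N x) (t * M x) := by
  refine ⟨fun x => (hN.1 x).trans (le_max_left _ _), fun x hx => ?_, fun s x => ?_,
    fun x y => max_le ?_ ?_⟩
  · exact hN.2.1 x (le_antisymm (hx ▸ le_max_left _ _) (hN.1 x))
  · dsimp only
    rw [hN.2.2.1, hM.2.1, mul_left_comm, mul_max_of_nonneg _ _ (abs_nonneg s)]
  · exact (hN.2.2.2 x y).trans (add_le_add (le_max_left _ _) (le_max_left _ _))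
  · calc t * M (x + y) ≤ t * M x + t * M y := by
          rw [← mul_add]; exact mul_le_mul_of_nonneg_left (hM.2.2 x y) ht
      _ ≤ _ := add_le_add (le_max_right _ _) (le_max_right _ _)

end IsNorm

lemma exists_submodule_ne_bot_ne_top (hm : 2 ≤ m) :
    ∃ W : Submodule ℝ (Fin m → ℝ), W ≠ ⊥ ∧ W ≠ ⊤ := by
  set v : Fin m → ℝ := Pi.single ⟨0, by omega⟩ 1
  have hv : v ≠ 0 := by simp [v]
  refine ⟨ℝ ∙ v, by simpa using hv, fun htop => ?_⟩
  have := finrank_span_singleton (K := ℝ) hv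
  rw [htop, finrank_top, Module.finrank_fin_fun] at this
  omega

namespace IsIrreducibleFamily

variable {A : Fin r → Matrix (Fin m) (Fin m) ℝ}

/-- The common kernel is invariant; were it everything, every subspace would be invariant. -/
lemma iInf_ker_eq_bot (hm : 2 ≤ m) (hA : IsIrreducibleFamily A) :
    ⨅ i, LinearMap.ker (A i).mulVecLin = ⊥ := by
  have mem_ker : ∀ {y}, y ∈ ⨅ i, LinearMap.ker (A i).mulVecLin ↔ ∀ i, (A i).mulVec y = 0 := by
    simp [Submodule.mem_iInf]
  refine (hA _ fun i y hy => ?_).resolve_right fun htop => ?_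
  · rw [mem_ker.mp hy i]
    exact Submodule.zero_mem _
  · obtain ⟨W, hbot, htop'⟩ := exists_submodule_ne_bot_ne_top hm
    refine (hA W fun i y _ => ?_).elim hbot htop'
    rw [mem_ker.mp (htop ▸ Submodule.mem_top) i]
    exact W.zero_mem

lemma exists_mulVec_ne_zero (hm : 2 ≤ m) (hA : IsIrreducibleFamily A) {x : Fin m → ℝ}
    (hx : x ≠ 0) : ∃ i, (A i).mulVec x ≠ 0 := by
  by_contra! h
  refine hx ((Submodule.mem_bot ℝ).mp ?_)
  rw [← hA.iInf_ker_eq_bot hm]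
  simpa [Submodule.mem_iInf] using h

end IsIrreducibleFamily

section Ratio

variable {A : Fin r → Matrix (Fin m) (Fin m) ℝ} {N : (Fin m → ℝ) → ℝ}

lemma maxA_pos (hm : 2 ≤ m) (hA : IsIrreducibleFamily A) (hN : IsNorm N) {x : Fin m → ℝ}
    (hx : x ≠ 0) : 0 < maxA A N x := by
  obtain ⟨i, hi⟩ := hA.exists_mulVec_ne_zero hm hx
  exact (hN.pos hi).trans_le (le_maxA A N x i)

lemma maxA_mono {N' : (Fin m → ℝ) → ℝ} (h : ∀ x, N x ≤ N' x) (x : Fin m → ℝ) :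
    maxA A N x ≤ maxA A N' x :=
  ciSup_mono (Set.finite_range _).bddAbove fun _ => h _

/-- The ratio is scale invariant, so its values on `x ≠ 0` are those on the unit sphere. -/
lemma isCompact_maxA_div_image (hN : IsNorm N) :
    IsCompact ((fun x => maxA A N x / N x) '' {x | x ≠ 0}) := by
  have hM := hN.isSeminorm.maxA A
  have sphere_ne : ∀ y ∈ Metric.sphere (0 : Fin m → ℝ) 1, y ≠ 0 := fun y hy h0 => by
    simp [h0] at hy
  have himage : (fun x => maxA A N x / N x) '' {x | x ≠ 0} =
      (fun x => maxA A N x / N x) '' Metric.sphere 0 1 := by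
    refine subset_antisymm ?_ (Set.image_mono sphere_ne)
    rintro _ ⟨x, hx, rfl⟩
    have hxn : ‖x‖ ≠ 0 := norm_ne_zero_iff.mpr hx
    refine ⟨‖x‖⁻¹ • x, by simp [norm_smul, hxn], ?_⟩
    simp only [hM.2.1, hN.2.2.1]
    exact mul_div_mul_left _ _ (abs_ne_zero.mpr (inv_ne_zero hxn))
  rw [himage]
  exact (isCompact_sphere 0 1).image_of_continuousOn
    (hM.continuous.continuousOn.div hN.isSeminorm.continuous.continuousOn
      fun x hx => (hN.pos (sphere_ne x hx)).ne')

lemma rhoInf_nonneg (hN : IsSeminorm N) : 0 ≤ rhoInf A N :=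
  Real.sInf_nonneg <| by
    rintro _ ⟨x, -, rfl⟩
    exact div_nonneg ((hN.maxA A).1 x) (hN.1 x)

lemma rhoInf_mul_le_maxA (hN : IsNorm N) (x : Fin m → ℝ) : rhoInf A N * N x ≤ maxA A N x := by
  rcases eq_or_ne x 0 with rfl | hx
  · rw [hN.isSeminorm.map_zero, mul_zero]
    exact (hN.isSeminorm.maxA A).1 0
  · rw [← le_div_iff₀ (hN.pos hx)]
    exact csInf_le (isCompact_maxA_div_image hN).bddBelow ⟨x, hx, rfl⟩

lemma maxA_le_rhoSup_mul (hN : IsNorm N) (x : Fin m → ℝ) : maxA A N x ≤ rhoSup A N * N x := by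
  rcases eq_or_ne x 0 with rfl | hx
  · rw [hN.isSeminorm.map_zero, mul_zero, (hN.isSeminorm.maxA A).map_zero]
  · rw [← div_le_iff₀ (hN.pos hx)]
    exact le_csSup (isCompact_maxA_div_image hN).bddAbove ⟨x, hx, rfl⟩

lemma rhoInf_le_rhoSup [NeZero m] (hN : IsNorm N) : rhoInf A N ≤ rhoSup A N := by
  obtain ⟨x, hx⟩ := exists_ne (0 : Fin m → ℝ)
  exact le_of_mul_le_mul_right ((rhoInf_mul_le_maxA hN x).trans (maxA_le_rhoSup_mul hN x))
    (hN.pos hx)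

lemma rhoInf_pos (hm : 2 ≤ m) (hA : IsIrreducibleFamily A) (hN : IsNorm N) :
    0 < rhoInf A N := by
  have : NeZero m := ⟨by omega⟩
  obtain ⟨x, hx⟩ := exists_ne (0 : Fin m → ℝ)
  obtain ⟨y, hy, hmin⟩ :=
    (isCompact_maxA_div_image (A := A) hN).sInf_mem ⟨_, x, hx, rfl⟩
  rw [rhoInf, ← hmin]
  exact div_pos (maxA_pos hm hA hN hy) (hN.pos hy)

lemma le_rhoInf [NeZero m] (hN : IsNorm N) {c : ℝ} (h : ∀ x, c * N x ≤ maxA A N x) :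
    c ≤ rhoInf A N := by
  obtain ⟨x, hx⟩ := exists_ne (0 : Fin m → ℝ)
  refine le_csInf ⟨_, x, hx, rfl⟩ ?_
  rintro _ ⟨y, hy, rfl⟩
  exact (le_div_iff₀ (hN.pos hy)).mpr (h y)

lemma rhoSup_le [NeZero m] (hN : IsNorm N) {c : ℝ} (h : ∀ x, maxA A N x ≤ c * N x) :
    rhoSup A N ≤ c := by
  obtain ⟨x, hx⟩ := exists_ne (0 : Fin m → ℝ)
  refine csSup_le ⟨_, x, hx, rfl⟩ ?_
  rintro _ ⟨y, hy, rfl⟩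
  exact (div_le_iff₀ (hN.pos hy)).mpr (h y)

end Ratio

section Relaxation

variable [NeZero m] {A : Fin r → Matrix (Fin m) (Fin m) ℝ} {N : (Fin m → ℝ) → ℝ} {t : ℝ}

lemma rhoInf_le_rhoInf_max (hN : IsNorm N) (ht : 0 ≤ t) :
    rhoInf A N ≤ rhoInf A fun x => max (N x) (t * maxA A N x) := by
  refine le_rhoInf (hN.max_mul (hN.isSeminorm.maxA A) ht) fun x => ?_
  rw [mul_max_of_nonneg _ _ (rhoInf_nonneg hN.isSeminorm)]
  refine max_le ((rhoInf_mul_le_maxA hN x).trans (maxA_mono (fun y => le_max_left _ _) x)) ?_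
  rw [mul_left_comm, maxA, Real.mul_iSup_of_nonneg (rhoInf_nonneg hN.isSeminorm),
    Real.mul_iSup_of_nonneg ht]
  refine ciSup_mono (Set.finite_range _).bddAbove fun i => ?_
  calc t * (rhoInf A N * N ((A i).mulVec x)) ≤ t * maxA A N ((A i).mulVec x) :=
        mul_le_mul_of_nonneg_left (rhoInf_mul_le_maxA hN _) ht
    _ ≤ _ := le_max_right _ _

lemma rhoSup_max_le_rhoSup (hN : IsNorm N) (ht : 0 < t) (htρ : t⁻¹ ≤ rhoSup A N) :
    (rhoSup A fun x => max (N x) (t * maxA A N x)) ≤ rhoSup A N := by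
  have hρ : 0 ≤ rhoSup A N := (inv_pos.mpr ht).le.trans htρ
  have hN' := hN.max_mul (hN.isSeminorm.maxA A) ht.le
  refine rhoSup_le hN' fun x => ?_
  have hrelax : rhoSup A N * (t * maxA A N x) ≤ rhoSup A N * max (N x) (t * maxA A N x) :=
    mul_le_mul_of_nonneg_left (le_max_right _ _) hρ
  refine Real.iSup_le (fun i => max_le ?_ ?_) (mul_nonneg hρ (hN'.1 x))
  · calc N ((A i).mulVec x) ≤ maxA A N x := le_maxA A N x i
      _ = t⁻¹ * (t * maxA A N x) := (inv_mul_cancel_left₀ ht.ne' _).symm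
      _ ≤ rhoSup A N * (t * maxA A N x) :=
          mul_le_mul_of_nonneg_right htρ (mul_nonneg ht.le ((hN.isSeminorm.maxA A).1 x))
      _ ≤ _ := hrelax
  · calc t * maxA A N ((A i).mulVec x) ≤ t * (rhoSup A N * maxA A N x) := by
          gcongr
          exact (maxA_le_rhoSup_mul hN _).trans
            (mul_le_mul_of_nonneg_left (le_maxA A N x i) hρ)
      _ = rhoSup A N * (t * maxA A N x) := mul_left_comm _ _ _
      _ ≤ _ := hrelax

end Relaxation

lemma IsAveraging.mem_Icc {γ : ℝ → ℝ → ℝ} (hγ : IsAveraging γ) {a b : ℝ} (ha : 0 < a)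
    (hab : a ≤ b) : γ a b ∈ Set.Icc a b := by
  rcases hab.eq_or_lt with rfl | hlt
  · rw [hγ.2.1 a ha]
    exact Set.left_mem_Icc.mpr le_rfl
  · obtain ⟨hmin, hmax⟩ := hγ.2.2 a b ha (ha.trans hlt) hlt.ne
    rw [min_eq_left hab] at hmin
    rw [max_eq_right hab] at hmax
    exact ⟨hmin.le, hmax.le⟩

section Iteration

variable {A : Fin r → Matrix (Fin m) (Fin m) ℝ} {γ : ℝ → ℝ → ℝ} {N0 : (Fin m → ℝ) → ℝ}

lemma gamma_mem_Icc (hm : 2 ≤ m) (hA : IsIrreducibleFamily A) (hγ : IsAveraging γ)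
    {N : (Fin m → ℝ) → ℝ} (hN : IsNorm N) :
    γ (rhoInf A N) (rhoSup A N) ∈ Set.Icc (rhoInf A N) (rhoSup A N) :=
  have : NeZero m := ⟨by omega⟩
  hγ.mem_Icc (rhoInf_pos hm hA hN) (rhoInf_le_rhoSup hN)

lemma gamma_pos (hm : 2 ≤ m) (hA : IsIrreducibleFamily A) (hγ : IsAveraging γ)
    {N : (Fin m → ℝ) → ℝ} (hN : IsNorm N) : 0 < γ (rhoInf A N) (rhoSup A N) :=
  (rhoInf_pos hm hA hN).trans_le (gamma_mem_Icc hm hA hγ hN).1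

lemma isNorm_iterN (hm : 2 ≤ m) (hA : IsIrreducibleFamily A) (hγ : IsAveraging γ)
    (hN0 : IsNorm N0) : ∀ n, IsNorm (iterN A γ N0 n)
  | 0 => hN0
  | n + 1 =>
    have hN := isNorm_iterN hm hA hγ hN0 n
    hN.max_mul (hN.isSeminorm.maxA A) (inv_pos.mpr (gamma_pos hm hA hγ hN)).le

lemma rhoInf_iterN_le_succ (hm : 2 ≤ m) (hA : IsIrreducibleFamily A) (hγ : IsAveraging γ)
    (hN0 : IsNorm N0) (n : ℕ) :
    rhoInf A (iterN A γ N0 n) ≤ rhoInf A (iterN A γ N0 (n + 1)) :=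
  have : NeZero m := ⟨by omega⟩
  have hN := isNorm_iterN hm hA hγ hN0 n
  rhoInf_le_rhoInf_max hN (inv_pos.mpr (gamma_pos hm hA hγ hN)).le

lemma rhoSup_iterN_succ_le (hm : 2 ≤ m) (hA : IsIrreducibleFamily A) (hγ : IsAveraging γ)
    (hN0 : IsNorm N0) (n : ℕ) :
    rhoSup A (iterN A γ N0 (n + 1)) ≤ rhoSup A (iterN A γ N0 n) :=
  have : NeZero m := ⟨by omega⟩
  have hN := isNorm_iterN hm hA hγ hN0 n
  rhoSup_max_le_rhoSup hN (inv_pos.mpr (gamma_pos hm hA hγ hN))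
    (by rw [inv_inv]; exact (gamma_mem_Icc hm hA hγ hN).2)

end Iteration

theorem stmt11_general {m r : ℕ} (hm : 2 ≤ m)
    (A : Fin r → Matrix (Fin m) (Fin m) ℝ) (hA : IsIrreducibleFamily A)
    (γ : ℝ → ℝ → ℝ) (hγ : IsAveraging γ)
    (N0 : (Fin m → ℝ) → ℝ) (hN0 : IsNorm N0) :
    (∀ n : ℕ,
        rhoInf A (iterN A γ N0 n) ≤ rhoInf A (iterN A γ N0 (n + 1)) ∧
          rhoInf A (iterN A γ N0 (n + 1)) ≤ rhoSup A (iterN A γ N0 (n + 1)) ∧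
            rhoSup A (iterN A γ N0 (n + 1)) ≤ rhoSup A (iterN A γ N0 n)) ∧
      (∀ n k : ℕ, rhoInf A (iterN A γ N0 n) ≤ rhoSup A (iterN A γ N0 k)) ∧
      (∃ l : ℝ, Tendsto (fun n => rhoInf A (iterN A γ N0 n)) atTop (𝓝 l)) ∧
      (∃ l : ℝ, Tendsto (fun n => rhoSup A (iterN A γ N0 n)) atTop (𝓝 l)) := by
  have : NeZero m := ⟨by omega⟩
  set ρInf : ℕ → ℝ := fun n => rhoInf A (iterN A γ N0 n)
  set ρSup : ℕ → ℝ := fun n => rhoSup A (iterN A γ N0 n)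
  have hle : ∀ n, ρInf n ≤ ρSup n := fun n => rhoInf_le_rhoSup (isNorm_iterN hm hA hγ hN0 n)
  have hmono : Monotone ρInf := monotone_nat_of_le_succ (rhoInf_iterN_le_succ hm hA hγ hN0)
  have hanti : Antitone ρSup := antitone_nat_of_succ_le (rhoSup_iterN_succ_le hm hA hγ hN0)
  have hcross : ∀ n k, ρInf n ≤ ρSup k := fun n k =>
    (hmono (le_max_left n k)).trans ((hle _).trans (hanti (le_max_right n k)))
  refine ⟨fun n => ⟨hmono n.le_succ, hle (n + 1), hanti n.le_succ⟩, hcross,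
    ⟨_, tendsto_atTop_ciSup hmono ⟨ρSup 0, ?_⟩⟩, ⟨_, tendsto_atTop_ciInf hanti ⟨ρInf 0, ?_⟩⟩⟩
  · rintro _ ⟨n, rfl⟩
    exact hcross n 0
  · rintro _ ⟨n, rfl⟩
    exact hcross 0 n

/-- `ρ⁻_n ≤ ρ⁻_{n+1} ≤ ρ⁺_{n+1} ≤ ρ⁺_n` for all `n`; in particular
`ρ⁻_n ≤ ρ⁺_k` for all `n, k` and the limits of `{ρ⁻_n}` and `{ρ⁺_n}` exist. -/
theorem stmt11 {m r : ℕ} (hm : 2 ≤ m) (hr : 1 ≤ r)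
    (A : Fin r → Matrix (Fin m) (Fin m) ℝ) (hA : IsIrreducibleFamily A)
    (γ : ℝ → ℝ → ℝ) (hγ : IsAveraging γ)
    (N0 : (Fin m → ℝ) → ℝ) (hN0 : IsNorm N0)
    (e : Fin m → ℝ) (he : N0 e = 1) :
    (∀ n : ℕ,
        rhoInf A (iterN A γ N0 n) ≤ rhoInf A (iterN A γ N0 (n + 1)) ∧
          rhoInf A (iterN A γ N0 (n + 1)) ≤ rhoSup A (iterN A γ N0 (n + 1)) ∧
            rhoSup A (iterN A γ N0 (n + 1)) ≤ rhoSup A (iterN A γ N0 n)) ∧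
      (∀ n k : ℕ, rhoInf A (iterN A γ N0 n) ≤ rhoSup A (iterN A γ N0 k)) ∧
      (∃ l : ℝ, Tendsto (fun n => rhoInf A (iterN A γ N0 n)) atTop (𝓝 l)) ∧
      (∃ l : ℝ, Tendsto (fun n => rhoSup A (iterN A γ N0 n)) atTop (𝓝 l)) :=
  stmt11_general hm A hA γ hγ N0 hN0
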